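/- Let σ > 0 and let μ be the Gaussian measure on ℝ with mean 0 and variance σ². Then for every w ≤ 0, √(2/π) · exp(−w²/(2σ²)) / (√(4 + w²/σ²) − w/σ) ≤ μ((−∞, w]) ≤ √(2/π) · exp(−w²/(2σ²)) / (√(2 + w²/σ²) − w/σ). (The sharper CDF bounds (4.5) derived from Abramowitz–Stegun 7.1.13.) -/

import Mathlib

open MeasureTheory ProbabilityTheory Set
open Filter Topology Real

/-!
After rescaling by `σ` and reflecting, the bounds at `w ≤ 0` become Mills-ratio bounds for the
standard normal density `φ` at `x = -w / σ ≥ 0`: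
`(√(x² + 4) - x) / 2 · φ x ≤ ∫_x^∞ φ ≤ (√(x² + 2) - x) · φ x`.
All three terms tend to `0` at infinity, so each inequality follows once the difference of its
two sides is monotone. The tail has derivative `-φ`, while
`((√(x² + c) - x) φ x)' = -(√(x² + c) - x) (x + 1 / √(x² + c)) φ x`, so monotonicity reduces to
`1 ≤ (√(x² + 2) - x) (x + 1 / √(x² + 2))` for `x ≥ 0` and
`(√(x² + 4) - x) (x + 1 / √(x² + 4)) ≤ 2`, both of which come down to squaring.
-/

theorem le_of_hasDerivAt_le_of_tendsto_sub {f g f' g' : ℝ → ℝ} {a : ℝ}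
    (hf : ∀ x ≥ a, HasDerivAt f (f' x) x) (hg : ∀ x ≥ a, HasDerivAt g (g' x) x)
    (hfg' : ∀ x ≥ a, g' x ≤ f' x) (hlim : Tendsto (fun x ↦ f x - g x) atTop (𝓝 0)) :
    f a ≤ g a := by
  have hmono : MonotoneOn (fun x ↦ f x - g x) (Ici a) :=
    monotoneOn_of_hasDerivWithinAt_nonneg (convex_Ici a)
      (fun x hx ↦ ((hf x hx).sub (hg x hx)).continuousAt.continuousWithinAt)
      (fun x hx ↦ ((hf x (interior_subset hx)).sub (hg x (interior_subset hx))).hasDerivWithinAt)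
      (fun x hx ↦ sub_nonneg.2 (hfg' x (interior_subset hx)))
  have : f a - g a ≤ 0 := ge_of_tendsto hlim <| by
    filter_upwards [eventually_ge_atTop a] with y hy using hmono self_mem_Ici hy hy
  linarith

theorem hasDerivAt_integral_Ioi {E : Type*} [NormedAddCommGroup E] [NormedSpace ℝ E]
    [CompleteSpace E] {f : ℝ → E} (hf : Integrable f) {x : ℝ} (hx : ContinuousAt f x) :
    HasDerivAt (fun a ↦ ∫ t in Ioi a, f t) (-f x) x := by
  have hsplit :
      (fun a ↦ ∫ t in Ioi a, f t) = fun a ↦ (∫ t in Ioi 0, f t) - ∫ t in 0..a, f t := by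
    funext a
    rw [← intervalIntegral.integral_interval_add_Ioi (a := 0) (b := a) hf.integrableOn
      hf.integrableOn, add_sub_cancel_left]
  rw [hsplit]
  exact (intervalIntegral.integral_hasDerivAt_right hf.intervalIntegrable
    hf.aestronglyMeasurable.stronglyMeasurableAtFilter hx).const_sub _

theorem sqrt_sq_add_sub_eq_div {c : ℝ} (hc : 0 < c) (x : ℝ) :
    √(x ^ 2 + c) - x = c / (√(x ^ 2 + c) + x) := by
  have hlt : |x| < √(x ^ 2 + c) := by
    rw [← Real.sqrt_sq_eq_abs]
    exact Real.sqrt_lt_sqrt (sq_nonneg x) (by linarith)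
  have hpos : 0 < √(x ^ 2 + c) + x := by linarith [neg_abs_le x]
  rw [eq_div_iff hpos.ne']
  nlinarith [Real.sq_sqrt (by positivity : 0 ≤ x ^ 2 + c)]

theorem tendsto_sqrt_sq_add_sub_mul {c : ℝ} (hc : 0 ≤ c) {u : ℝ → ℝ}
    (hu : Tendsto u atTop (𝓝 0)) :
    Tendsto (fun x ↦ (√(x ^ 2 + c) - x) * u x) atTop (𝓝 0) := by
  refine isBoundedUnder_le_mul_tendsto_zero ⟨√c, eventually_map.2 ?_⟩ hu
  filter_upwards [eventually_ge_atTop 0] with x hx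
  have hlow : x ≤ √(x ^ 2 + c) := Real.le_sqrt_of_sq_le (by linarith)
  have hup : √(x ^ 2 + c) ≤ x + √c := by
    rw [Real.sqrt_le_left (by positivity)]
    nlinarith [Real.sq_sqrt hc, Real.sqrt_nonneg c]
  rw [Function.comp_apply, Real.norm_eq_abs, abs_of_nonneg (by linarith)]
  linarith

theorem one_le_sqrt_sq_add_two_sub_mul {x : ℝ} (hx : 0 ≤ x) :
    1 ≤ (√(x ^ 2 + 2) - x) * (x + (√(x ^ 2 + 2))⁻¹) := by
  have hs : 0 < √(x ^ 2 + 2) := Real.sqrt_pos.2 (by positivity)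
  have hs2 : √(x ^ 2 + 2) ^ 2 = x ^ 2 + 2 := Real.sq_sqrt (by positivity)
  have hxs : x * √(x ^ 2 + 2) ≤ x ^ 2 + 1 := by
    nlinarith [sq_nonneg (x * √(x ^ 2 + 2) - x ^ 2 - 1)]
  have hdiff : (√(x ^ 2 + 2) - x) * (x + (√(x ^ 2 + 2))⁻¹) - 1
      = x * (x ^ 2 + 1 - x * √(x ^ 2 + 2)) / √(x ^ 2 + 2) := by
    field_simp
    linear_combination x * hs2
  have := mul_nonneg hx (sub_nonneg.2 hxs)
  rw [← sub_nonneg, hdiff]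
  positivity

theorem sqrt_sq_add_four_sub_mul_le (x : ℝ) :
    (√(x ^ 2 + 4) - x) * (x + (√(x ^ 2 + 4))⁻¹) ≤ 2 := by
  have hs : 0 < √(x ^ 2 + 4) := Real.sqrt_pos.2 (by positivity)
  have hs2 : √(x ^ 2 + 4) ^ 2 = x ^ 2 + 4 := Real.sq_sqrt (by positivity)
  have hsq : (√(x ^ 2 + 4) * (x ^ 2 + 1)) ^ 2 = (x * (x ^ 2 + 3)) ^ 2 + 4 := by
    rw [mul_pow, hs2]
    ring
  have key : x * (x ^ 2 + 3) ≤ √(x ^ 2 + 4) * (x ^ 2 + 1) := by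
    nlinarith [mul_pos hs (by positivity : (0 : ℝ) < x ^ 2 + 1)]
  have hdiff : 2 - (√(x ^ 2 + 4) - x) * (x + (√(x ^ 2 + 4))⁻¹)
      = (√(x ^ 2 + 4) * (x ^ 2 + 1) - x * (x ^ 2 + 3)) / √(x ^ 2 + 4) := by
    field_simp
    linear_combination (-x) * hs2
  have := sub_nonneg.2 key
  rw [← sub_nonneg, hdiff]
  positivity

theorem hasDerivAt_gaussianPDFReal (μ : ℝ) (v : NNReal) (x : ℝ) :
    HasDerivAt (gaussianPDFReal μ v) (-((x - μ) / v) * gaussianPDFReal μ v x) x := by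
  have hexp : HasDerivAt (fun y ↦ -(y - μ) ^ 2 / (2 * v)) (-((x - μ) / v)) x :=
    ((((hasDerivAt_id' x).sub_const μ).pow 2).neg.div_const (2 * (v : ℝ))).congr_deriv
      (by ring)
  rw [gaussianPDFReal_def]
  exact (hexp.exp.const_mul _).congr_deriv (by ring)

theorem tendsto_gaussianPDFReal_zero_one_atTop :
    Tendsto (gaussianPDFReal 0 1) atTop (𝓝 0) := by
  have h : Tendsto (fun x : ℝ ↦ -(x - 0) ^ 2 / (2 * ((1 : NNReal) : ℝ))) atTop atBot := by
    simp only [sub_zero, NNReal.coe_one, mul_one, neg_div]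
    exact tendsto_neg_atTop_atBot.comp
      ((tendsto_pow_atTop two_ne_zero).atTop_div_const two_pos)
  rw [gaussianPDFReal_def]
  simpa using (tendsto_exp_atBot.comp h).const_mul (√(2 * π * (1 : NNReal)))⁻¹

theorem hasDerivAt_sqrt_sq_add_sub_mul_gaussianPDFReal {c : ℝ} (hc : 0 < c) (x : ℝ) :
    HasDerivAt (fun y ↦ (√(y ^ 2 + c) - y) * gaussianPDFReal 0 1 y)
      (-((√(x ^ 2 + c) - x) * (x + (√(x ^ 2 + c))⁻¹) * gaussianPDFReal 0 1 x)) x := by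
  have hs : √(x ^ 2 + c) ≠ 0 := (Real.sqrt_pos.2 (by positivity)).ne'
  have hsqrt : HasDerivAt (fun y ↦ √(y ^ 2 + c)) (x / √(x ^ 2 + c)) x := by
    convert ((hasDerivAt_pow 2 x).add_const c).sqrt (by positivity) using 1
    norm_num
    field_simp
  refine ((hsqrt.sub (hasDerivAt_id' x)).mul (hasDerivAt_gaussianPDFReal 0 1 x)).congr_deriv ?_
  simp only [Pi.sub_apply, sub_zero, NNReal.coe_one, div_one]
  field_simp
  ring

theorem integral_Ioi_gaussianPDFReal_le {x : ℝ} (hx : 0 ≤ x) :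
    ∫ t in Ioi x, gaussianPDFReal 0 1 t ≤ 2 * gaussianPDFReal 0 1 x / (√(x ^ 2 + 2) + x) := by
  rw [mul_div_right_comm, ← sqrt_sq_add_sub_eq_div two_pos]
  refine le_of_hasDerivAt_le_of_tendsto_sub (f := fun a ↦ ∫ t in Ioi a, gaussianPDFReal 0 1 t)
    (g := fun y ↦ (√(y ^ 2 + 2) - y) * gaussianPDFReal 0 1 y)
    (fun y _ ↦ hasDerivAt_integral_Ioi (integrable_gaussianPDFReal 0 1)
      (hasDerivAt_gaussianPDFReal 0 1 y).continuousAt)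
    (fun y _ ↦ hasDerivAt_sqrt_sq_add_sub_mul_gaussianPDFReal two_pos y) (fun y hy ↦ ?_) ?_
  · have := one_le_sqrt_sq_add_two_sub_mul (hx.trans hy)
    nlinarith [gaussianPDFReal_pos 0 1 y one_ne_zero]
  · simpa using (tendsto_integral_Ioi_zero tendsto_id).sub
      (tendsto_sqrt_sq_add_sub_mul zero_le_two tendsto_gaussianPDFReal_zero_one_atTop)

theorem two_mul_gaussianPDFReal_div_le_integral_Ioi (x : ℝ) :
    2 * gaussianPDFReal 0 1 x / (√(x ^ 2 + 4) + x) ≤ ∫ t in Ioi x, gaussianPDFReal 0 1 t := by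
  have hrw : 2 * gaussianPDFReal 0 1 x / (√(x ^ 2 + 4) + x)
      = (√(x ^ 2 + 4) - x) * gaussianPDFReal 0 1 x / 2 := by
    rw [sqrt_sq_add_sub_eq_div four_pos]
    ring
  rw [hrw]
  refine le_of_hasDerivAt_le_of_tendsto_sub
    (f := fun y ↦ (√(y ^ 2 + 4) - y) * gaussianPDFReal 0 1 y / 2)
    (g := fun a ↦ ∫ t in Ioi a, gaussianPDFReal 0 1 t)
    (fun y _ ↦ (hasDerivAt_sqrt_sq_add_sub_mul_gaussianPDFReal four_pos y).div_const 2)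
    (fun y _ ↦ hasDerivAt_integral_Ioi (integrable_gaussianPDFReal 0 1)
      (hasDerivAt_gaussianPDFReal 0 1 y).continuousAt) (fun y _ ↦ ?_) ?_
  · have := sqrt_sq_add_four_sub_mul_le y
    nlinarith [gaussianPDFReal_pos 0 1 y one_ne_zero]
  · simpa using ((tendsto_sqrt_sq_add_sub_mul zero_le_four
      tendsto_gaussianPDFReal_zero_one_atTop).div_const 2).sub
      (tendsto_integral_Ioi_zero tendsto_id)

theorem gaussianReal_Iic_eq_gaussianReal_zero_one_Ici (μ : ℝ) {σ : ℝ} (hσ : 0 < σ) (w : ℝ) :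
    gaussianReal μ ⟨σ ^ 2, sq_nonneg σ⟩ (Iic w) = gaussianReal 0 1 (Ici ((μ - w) / σ)) := by
  have hmap :
      (gaussianReal 0 1).map (fun x ↦ μ + -σ * x) = gaussianReal μ ⟨σ ^ 2, sq_nonneg σ⟩ := by
    rw [show (fun x ↦ μ + -σ * x) = (μ + ·) ∘ (-σ * ·) from rfl,
      ← Measure.map_map (by fun_prop) (by fun_prop), gaussianReal_map_const_mul,
      gaussianReal_map_const_add]
    congr 1
    · simp
    · ext
      simp
      rfl
  rw [← hmap, Measure.map_apply (by fun_prop) measurableSet_Iic]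
  congr 1
  ext x
  simp only [mem_preimage, mem_Iic, mem_Ici, div_le_iff₀ hσ]
  constructor <;> intro <;> linarith

theorem toReal_gaussianReal_zero_one_Ici (x : ℝ) :
    (gaussianReal 0 1 (Ici x)).toReal = ∫ t in Ioi x, gaussianPDFReal 0 1 t := by
  rw [gaussianReal_apply_eq_integral 0 one_ne_zero, ENNReal.toReal_ofReal
    (setIntegral_nonneg measurableSet_Ici fun t _ ↦ gaussianPDFReal_nonneg 0 1 t),
    integral_Ici_eq_integral_Ioi]

theorem two_mul_gaussianPDFReal_zero_one (x : ℝ) :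
    2 * gaussianPDFReal 0 1 x = √(2 / π) * exp (-x ^ 2 / 2) := by
  have h : √(2 / π) * √(2 * π) = 2 := by
    rw [← Real.sqrt_mul (by positivity), show 2 / π * (2 * π) = 2 ^ 2 by field_simp,
      Real.sqrt_sq two_pos.le]
  simp only [gaussianPDFReal, sub_zero, NNReal.coe_one, mul_one]
  field_simp
  linear_combination -h

/-- The sharper CDF bounds (4.5), derived from Abramowitz–Stegun 7.1.13, for the
Gaussian measure on `ℝ` with mean `0` and variance `σ²`, evaluated at `w ≤ 0`. -/
theorem sharper_cdf_bounds (σ : ℝ) (hσ : 0 < σ) (w : ℝ) (hw : w ≤ 0) :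
    Real.sqrt (2 / Real.pi) * Real.exp (-w ^ 2 / (2 * σ ^ 2)) /
        (Real.sqrt (4 + w ^ 2 / σ ^ 2) - w / σ) ≤
      ((gaussianReal 0 ⟨σ ^ 2, sq_nonneg σ⟩) (Set.Iic w)).toReal ∧
    ((gaussianReal 0 ⟨σ ^ 2, sq_nonneg σ⟩) (Set.Iic w)).toReal ≤
      Real.sqrt (2 / Real.pi) * Real.exp (-w ^ 2 / (2 * σ ^ 2)) /
        (Real.sqrt (2 + w ^ 2 / σ ^ 2) - w / σ) := by
  set b := -w / σ with hb
  have hb0 : 0 ≤ b := div_nonneg (neg_nonneg.2 hw) hσ.le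
  have hdensity : √(2 / π) * exp (-w ^ 2 / (2 * σ ^ 2)) = 2 * gaussianPDFReal 0 1 b := by
    rw [two_mul_gaussianPDFReal_zero_one, hb]
    field_simp
  have hden (c : ℝ) : √(c + w ^ 2 / σ ^ 2) - w / σ = √(b ^ 2 + c) + b := by
    rw [hb, neg_div, neg_sq, div_pow, add_comm c, sub_eq_add_neg]
  rw [gaussianReal_Iic_eq_gaussianReal_zero_one_Ici 0 hσ, zero_sub,
    toReal_gaussianReal_zero_one_Ici, hdensity, hden, hden]
  exact ⟨two_mul_gaussianPDFReal_div_le_integral_Ioi b, integral_Ioi_gaussianPDFReal_le hb0⟩
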